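/- Partial derivative of the entropy mix along a 3-Lax curve at the base point: let γ > 1, c_v > 0, let m ≥ 1, and for j = 1, …, m let a_j > 0 be weights and (ρ̄_j, q̄_j, Ē_j) gas states with ρ̄_j > 0, velocities ū_j, pressures p̄_j > 0, sound speeds c̄_j = √(γp̄_j/ρ̄_j) and entropies s̄_j, such that the denominator D := ∑_{j=1}^m a_j q̄_j is nonzero. Let Q_j(σ) = φ_j(σ)(ū_j + ψ_j(σ)) and S_j(σ) = c_v·ln(σ/φ_j(σ)^γ) be the mass flux and entropy along the 3-Lax curve of pipe j, and for a fixed index j₀ define g(σ) := (a_{j₀}·Q_{j₀}(σ)S_{j₀}(σ) + ∑_{j≠j₀} a_j·q̄_j s̄_j) / (a_{j₀}·Q_{j₀}(σ) + ∑_{j≠j₀} a_j·q̄_j), i.e., the entropy mix s* with the state of pipe j₀ moved along its 3-Lax curve. Then g has derivative at σ = p̄_{j₀} equal to g′(p̄_{j₀}) = (a_{j₀}·(ū_{j₀} + c̄_{j₀})/(c̄_{j₀}²·D))·(s̄_{j₀} − s̄*), where s̄* = (∑_{j=1}^m a_j q̄_j s̄_j)/D. -/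

import Mathlib

/-! At the base point `φ(p̄) = ρ̄` and `ψ(p̄) = 0`, and the rarefaction and shock branches of
the Lax curve agree to first order: `φ'(p̄) = ρ̄/(γp̄) = 1/c̄²` and `ψ'(p̄) = 1/(ρ̄c̄)`. So the
mass flux `Q = φ(ū + ψ)` has `Q'(p̄) = (ū + c̄)/c̄²`, while `φ'(p̄)` is exactly the isentropic
slope, so the entropy `S = c_v(ln σ - γ ln φ)` is stationary: `S'(p̄) = c_v(1/p̄ - γφ'/φ) = 0`.
Differentiating the quotient `s*(σ)` therefore only sees the flux, giving
`a Q'(p̄)(S(p̄) - s̄*)/D`. -/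

/-- The velocity function `ψ` of the Lax-curve parametrisation. -/
noncomputable def laxPsi (γ ρ p : ℝ) (σ : ℝ) : ℝ :=
  if σ ≤ p then
    (2 * Real.sqrt (γ * p / ρ) / (γ - 1)) * ((σ / p) ^ ((γ - 1) / (2 * γ)) - 1)
  else
    (σ - p) * Real.sqrt ((1 - (γ - 1) / (γ + 1)) / (ρ * (σ + ((γ - 1) / (γ + 1)) * p)))

/-- The density function `φ` of the Lax-curve parametrisation. -/
noncomputable def laxPhi (γ ρ p : ℝ) (σ : ℝ) : ℝ :=
  if σ ≤ p then
    ρ * (σ / p) ^ (1 / γ)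
  else
    ρ * (σ + ((γ - 1) / (γ + 1)) * p) / (((γ - 1) / (γ + 1)) * σ + p)

open Set Filter Topology

theorem HasDerivAt.ite_le {F : Type*} [NormedAddCommGroup F] [NormedSpace ℝ F]
    {f g : ℝ → F} {d : F} {p : ℝ}
    (hf : HasDerivAt f d p) (hg : HasDerivAt g d p) (hfg : f p = g p) :
    HasDerivAt (fun σ => if σ ≤ p then f σ else g σ) d p := by
  have hleft : HasDerivWithinAt (fun σ => if σ ≤ p then f σ else g σ) d (Iic p) p :=
    hf.hasDerivWithinAt.congr (fun x hx => if_pos hx) (if_pos le_rfl)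
  have hright : HasDerivWithinAt (fun σ => if σ ≤ p then f σ else g σ) d (Ici p) p := by
    refine hg.hasDerivWithinAt.congr (fun x (hx : p ≤ x) => ?_) (by simp [hfg])
    rcases hx.eq_or_lt with rfl | hlt
    · simp [hfg]
    · simp [not_le.mpr hlt]
  simpa [Iic_union_Ici] using hleft.union hright

theorem HasDerivAt.log_div_rpow {f : ℝ → ℝ} {f' x γ : ℝ} (hf : HasDerivAt f f' x)
    (hx : 0 < x) (hfx : 0 < f x) :
    HasDerivAt (fun σ => Real.log (σ / f σ ^ γ)) (1 / x - γ * f' / f x) x := by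
  have hsplit : (fun σ => Real.log σ - γ * Real.log (f σ)) =ᶠ[𝓝 x]
      fun σ => Real.log (σ / f σ ^ γ) := by
    filter_upwards [eventually_gt_nhds hx, hf.continuousAt.eventually (eventually_gt_nhds hfx)]
      with σ hσ hfσ
    rw [Real.log_div hσ.ne' (Real.rpow_pos_of_pos hfσ γ).ne', Real.log_rpow hfσ]
  refine (((Real.hasDerivAt_log hx.ne').sub ((hf.log hfx.ne').const_mul γ)).congr_of_eventuallyEq
    hsplit.symm).congr_deriv ?_
  ring

theorem hasDerivAt_mix_of_hasDerivAt_zero {Q S : ℝ → ℝ} {Q' x a A B : ℝ}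
    (hQ : HasDerivAt Q Q' x) (hS : HasDerivAt S 0 x) (hD : a * Q x + B ≠ 0) :
    HasDerivAt (fun σ => (a * Q σ * S σ + A) / (a * Q σ + B))
      (a * Q' / (a * Q x + B) * (S x - (a * Q x * S x + A) / (a * Q x + B))) x := by
  refine ((((hQ.const_mul a).fun_mul hS).add_const A).fun_div ((hQ.const_mul a).add_const B)
    hD).congr_deriv ?_
  field_simp
  ring

section LaxCurve

variable {γ ρ p : ℝ}

theorem laxPhi_self (hp : 0 < p) : laxPhi γ ρ p p = ρ := by
  simp [laxPhi, hp.ne']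

theorem laxPsi_self (hp : 0 < p) : laxPsi γ ρ p p = 0 := by
  simp [laxPsi, hp.ne']

theorem hasDerivAt_laxPhi (hγ : 1 < γ) (hp : 0 < p) :
    HasDerivAt (laxPhi γ ρ p) (ρ / (γ * p)) p := by
  have hγ0 : 0 < γ := by linarith
  have hrarefaction : HasDerivAt (fun σ => ρ * (σ / p) ^ (1 / γ)) (ρ / (γ * p)) p := by
    refine ((((hasDerivAt_id' p).div_const p).rpow_const
      (Or.inl (by simp [hp.ne']))).const_mul ρ).congr_deriv ?_
    rw [div_self hp.ne', Real.one_rpow, mul_one]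
    field_simp
  have hden : (γ - 1) / (γ + 1) * p + p ≠ 0 := by positivity
  have hshock : HasDerivAt (fun σ => ρ * (σ + (γ - 1) / (γ + 1) * p) /
      ((γ - 1) / (γ + 1) * σ + p)) (ρ / (γ * p)) p := by
    refine ((((hasDerivAt_id' p).add_const _).const_mul ρ).fun_div
      (((hasDerivAt_id' p).const_mul _).add_const p) hden).congr_deriv ?_
    field_simp
    rw [div_eq_iff (by nlinarith)]
    ring
  refine hrarefaction.ite_le hshock ?_
  rw [div_self hp.ne', Real.one_rpow, mul_one, add_comm, mul_div_assoc, div_self hden, mul_one]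

theorem hasDerivAt_laxPsi (hγ : 1 < γ) (hρ : 0 < ρ) (hp : 0 < p) :
    HasDerivAt (laxPsi γ ρ p) (1 / (ρ * Real.sqrt (γ * p / ρ))) p := by
  have hγ0 : 0 < γ := by linarith
  set c := Real.sqrt (γ * p / ρ)
  have hc0 : 0 < c := Real.sqrt_pos.mpr (by positivity)
  have hc2 : c ^ 2 = γ * p / ρ := Real.sq_sqrt (by positivity)
  have hrarefaction : HasDerivAt
      (fun σ => 2 * c / (γ - 1) * ((σ / p) ^ ((γ - 1) / (2 * γ)) - 1)) (1 / (ρ * c)) p := by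
    refine (((((hasDerivAt_id' p).div_const p).rpow_const
      (Or.inl (by simp [hp.ne']))).sub_const 1).const_mul _).congr_deriv ?_
    rw [div_self hp.ne', Real.one_rpow, mul_one]
    have hγ1 : γ - 1 ≠ 0 := by linarith
    field_simp
    rw [hc2]
    field_simp
  have hshock : HasDerivAt
      (fun σ => (σ - p) * Real.sqrt ((1 - (γ - 1) / (γ + 1)) / (ρ * (σ + (γ - 1) / (γ + 1) * p))))
      (1 / (ρ * c)) p := by
    have hslope :
        (1 - (γ - 1) / (γ + 1)) / (ρ * (p + (γ - 1) / (γ + 1) * p)) = 1 / (ρ * γ * p) := by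
      field_simp
      rw [div_eq_one_iff_eq (by nlinarith)]
      ring
    have hinner := (hasDerivAt_const p (1 - (γ - 1) / (γ + 1))).fun_div
      (((hasDerivAt_id' p).add_const ((γ - 1) / (γ + 1) * p)).const_mul ρ) (by positivity)
    refine (((hasDerivAt_id' p).sub_const p).mul (hinner.sqrt ?_)).congr_deriv ?_
    · rw [hslope]
      positivity
    · rw [sub_self, zero_mul, add_zero, one_mul, hslope]
      rw [← Real.sqrt_sq (by positivity : 0 ≤ 1 / (ρ * c)), div_pow, mul_pow, hc2]
      congr 1
      field_simp
  refine hrarefaction.ite_le hshock ?_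
  simp [hp.ne']

theorem hasDerivAt_log_div_laxPhi_rpow (hγ : 1 < γ) (hρ : 0 < ρ) (hp : 0 < p) :
    HasDerivAt (fun σ => Real.log (σ / laxPhi γ ρ p σ ^ γ)) 0 p := by
  refine ((hasDerivAt_laxPhi hγ hp).log_div_rpow hp (by rwa [laxPhi_self hp])).congr_deriv ?_
  rw [laxPhi_self hp]
  field_simp
  ring

theorem hasDerivAt_laxPhi_mul_add_laxPsi (u : ℝ) (hγ : 1 < γ) (hρ : 0 < ρ) (hp : 0 < p) :
    HasDerivAt (fun σ => laxPhi γ ρ p σ * (u + laxPsi γ ρ p σ))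
      ((u + Real.sqrt (γ * p / ρ)) / Real.sqrt (γ * p / ρ) ^ 2) p := by
  have hc0 : 0 < Real.sqrt (γ * p / ρ) := Real.sqrt_pos.mpr (by positivity)
  have hc2 : ρ * Real.sqrt (γ * p / ρ) ^ 2 = γ * p := by
    rw [Real.sq_sqrt (by positivity)]
    field_simp
  refine ((hasDerivAt_laxPhi hγ hp).mul
    ((hasDerivAt_laxPsi hγ hρ hp).const_add u)).congr_deriv ?_
  rw [laxPhi_self hp, laxPsi_self hp, add_zero]
  field_simp
  linear_combination u * hc2

end LaxCurve

theorem entropy_mix_deriv_along_lax3_general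
    (γ cv : ℝ) (hγ : 1 < γ)
    (m : ℕ)
    (a ρ q ub pb cb sb : Fin m → ℝ)
    (hρ : ∀ j, 0 < ρ j)
    (hub : ∀ j, ub j = q j / ρ j)
    (hppos : ∀ j, 0 < pb j)
    (hcb : ∀ j, cb j = Real.sqrt (γ * pb j / ρ j))
    (hsb : ∀ j, sb j = cv * Real.log (pb j / ρ j ^ γ))
    (D : ℝ) (hDdef : D = ∑ j, a j * q j) (hD : D ≠ 0)
    (j₀ : Fin m)
    (sstar : ℝ) (hsstar : sstar = (∑ j, a j * q j * sb j) / D) :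
    HasDerivAt
      (fun σ : ℝ =>
        (a j₀ * (laxPhi γ (ρ j₀) (pb j₀) σ * (ub j₀ + laxPsi γ (ρ j₀) (pb j₀) σ)) *
              (cv * Real.log (σ / laxPhi γ (ρ j₀) (pb j₀) σ ^ γ)) +
            ∑ j ∈ Finset.univ.erase j₀, a j * q j * sb j) /
          (a j₀ * (laxPhi γ (ρ j₀) (pb j₀) σ * (ub j₀ + laxPsi γ (ρ j₀) (pb j₀) σ)) +
            ∑ j ∈ Finset.univ.erase j₀, a j * q j))
      (a j₀ * (ub j₀ + cb j₀) / (cb j₀ ^ 2 * D) * (sb j₀ - sstar))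
      (pb j₀) := by
  have hp := hppos j₀
  have hflux := hasDerivAt_laxPhi_mul_add_laxPsi (ub j₀) hγ (hρ j₀) hp
  have hentropy : HasDerivAt (fun σ => cv * Real.log (σ / laxPhi γ (ρ j₀) (pb j₀) σ ^ γ))
      0 (pb j₀) := by
    simpa using (hasDerivAt_log_div_laxPhi_rpow hγ (hρ j₀) hp).const_mul cv
  have hflux_self : laxPhi γ (ρ j₀) (pb j₀) (pb j₀) * (ub j₀ + laxPsi γ (ρ j₀) (pb j₀) (pb j₀))
      = q j₀ := by
    rw [laxPhi_self hp, laxPsi_self hp, add_zero, hub, mul_div_cancel₀ _ (hρ j₀).ne']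
  have hentropy_self : cv * Real.log (pb j₀ / laxPhi γ (ρ j₀) (pb j₀) (pb j₀) ^ γ) = sb j₀ := by
    rw [laxPhi_self hp, hsb]
  have hflux_sum : a j₀ * q j₀ + ∑ j ∈ Finset.univ.erase j₀, a j * q j = D := by
    rw [hDdef]
    exact Finset.add_sum_erase _ (fun j => a j * q j) (Finset.mem_univ j₀)
  have hentropy_sum : a j₀ * q j₀ * sb j₀ + ∑ j ∈ Finset.univ.erase j₀, a j * q j * sb j
      = sstar * D := by
    rw [hsstar, div_mul_cancel₀ _ hD]
    exact Finset.add_sum_erase _ (fun j => a j * q j * sb j) (Finset.mem_univ j₀)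
  refine (hasDerivAt_mix_of_hasDerivAt_zero hflux hentropy ?_).congr_deriv ?_
  · rwa [hflux_self, hflux_sum]
  · rw [hflux_self, hentropy_self, hflux_sum, hentropy_sum, mul_div_cancel_right₀ _ hD, ← hcb]
    ring

/-- Partial derivative of the entropy mix along a 3-Lax curve at the base point:
moving the state of pipe `j₀` along its 3-Lax curve (mass flux
`Q_{j₀}(σ) = φ_{j₀}(σ)(ū_{j₀} + ψ_{j₀}(σ))`, entropy
`S_{j₀}(σ) = c_v·ln(σ/φ_{j₀}(σ)^γ)`) while freezing the other pipes, the entropy mix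
`g(σ)` has derivative `g′(p̄_{j₀}) = (a_{j₀}(ū_{j₀}+c̄_{j₀})/(c̄_{j₀}²·D))·(s̄_{j₀} − s̄*)`
where `D = ∑ a_j q̄_j ≠ 0` and `s̄* = (∑ a_j q̄_j s̄_j)/D`. -/
theorem entropy_mix_deriv_along_lax3
    (γ cv : ℝ) (hγ : 1 < γ) (hcv : 0 < cv)
    (m : ℕ) (hm : 1 ≤ m)
    (a ρ q E ub pb cb sb : Fin m → ℝ)
    (ha : ∀ j, 0 < a j) (hρ : ∀ j, 0 < ρ j)
    (hub : ∀ j, ub j = q j / ρ j)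
    (hpb : ∀ j, pb j = (γ - 1) * (E j - (q j) ^ 2 / (2 * ρ j)))
    (hppos : ∀ j, 0 < pb j)
    (hcb : ∀ j, cb j = Real.sqrt (γ * pb j / ρ j))
    (hsb : ∀ j, sb j = cv * Real.log (pb j / ρ j ^ γ))
    (D : ℝ) (hDdef : D = ∑ j, a j * q j) (hD : D ≠ 0)
    (j₀ : Fin m)
    (sstar : ℝ) (hsstar : sstar = (∑ j, a j * q j * sb j) / D) :
    HasDerivAt
      (fun σ : ℝ =>
        (a j₀ * (laxPhi γ (ρ j₀) (pb j₀) σ * (ub j₀ + laxPsi γ (ρ j₀) (pb j₀) σ)) *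
              (cv * Real.log (σ / laxPhi γ (ρ j₀) (pb j₀) σ ^ γ)) +
            ∑ j ∈ Finset.univ.erase j₀, a j * q j * sb j) /
          (a j₀ * (laxPhi γ (ρ j₀) (pb j₀) σ * (ub j₀ + laxPsi γ (ρ j₀) (pb j₀) σ)) +
            ∑ j ∈ Finset.univ.erase j₀, a j * q j))
      (a j₀ * (ub j₀ + cb j₀) / (cb j₀ ^ 2 * D) * (sb j₀ - sstar))
      (pb j₀) :=
  entropy_mix_deriv_along_lax3_general γ cv hγ m a ρ q ub pb cb sb hρ hub hppos hcb hsb D hDdef hD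
    j₀ sstar hsstar
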